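/- Let G₀ be a group acting by automorphisms on a finite dimensional semisimple associative algebra B over a field F, and suppose B = B̃₁ ⊕ ... ⊕ B̃_k is a direct sum of G₀-invariant ideals with each B̃_i G₀-simple. If g is an anti-automorphism of B normalizing the G₀-action (i.e., g G₀ g⁻¹ = G₀ as transformations, with g² ∈ G₀), then for each i, B̃_i + g(B̃_i) is a G-simple ideal of B, where G = ⟨G₀, g⟩. -/

import Mathlib

/-!
Write `P = B̃ᵢ`. Since `g` normalises `G₀` and `g² ∈ G₀`, the image `g(P)` is again a `G₀`-invariant
ideal and `g(g(P)) ⊆ P`, so `P + g(P)` is a `G`-invariant ideal. Let `J ⊆ P + g(P)` be a nonzero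
`G`-invariant ideal. By `G₀`-simplicity, `J ∩ P` is `0` or `P`. If it is `P`, then `g`-invariance
of `J` gives `J = P + g(P)`. If it is `0`, then `g(J ∩ g(P)) ⊆ J ∩ P = 0`, so `J` meets both
summands trivially; hence `J·J ⊆ J·P + J·g(P) = 0`, impossible for a nonzero ideal of a
semisimple ring, whose left ideals are generated by idempotents.
-/

section Normalizer

variable {R B G₀ : Type*} [CommRing R] [Ring B] [Algebra R B] [Group G₀]
  {σ : G₀ →* (B ≃ₐ[R] B)} {g : B ≃ₗ[R] B}

/-- `g⁻¹ σ(t) g = σ(t₀⁻¹ t' t₀)`, using `g⁻¹ = σ(t₀)⁻¹ g` and `g σ(t) g⁻¹ = σ(t')`. -/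
theorem exists_symm_conj_eq (hnorm : ∀ t : G₀, ∃ t' : G₀, ∀ b : B, g (σ t (g.symm b)) = σ t' b)
    {t₀ : G₀} (hg2 : ∀ b : B, g (g b) = σ t₀ b) :
    ∀ t : G₀, ∃ s : G₀, ∀ x : B, g.symm (σ t (g x)) = σ s x := by
  have hσ : ∀ (a b : G₀) (x : B), σ (a * b) x = σ a (σ b x) := fun a b x => by
    rw [map_mul, AlgEquiv.mul_apply]
  have hsymm : ∀ y : B, g.symm y = σ t₀⁻¹ (g y) := fun y => by
    rw [← g.apply_symm_apply y, hg2, ← hσ, inv_mul_cancel, map_one, g.apply_symm_apply]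
    rfl
  intro t
  obtain ⟨t', ht'⟩ := hnorm t
  refine ⟨t₀⁻¹ * t' * t₀, fun x => ?_⟩
  rw [hsymm, hσ, hσ, ← hg2, ← ht', g.symm_apply_apply]

end Normalizer

namespace Submodule

variable {R B : Type*} [CommRing R] [Ring B] [Algebra R B]

def IsTwoSidedIdeal (P : Submodule R B) : Prop :=
  ∀ a : B, ∀ x ∈ P, a * x ∈ P ∧ x * a ∈ P

def IsInvariant {G₀ : Type*} [Group G₀] (σ : G₀ →* (B ≃ₐ[R] B)) (P : Submodule R B) : Prop :=
  ∀ t : G₀, ∀ x ∈ P, σ t x ∈ P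

def IsSimpleInvariantIdeal {G₀ : Type*} [Group G₀] (σ : G₀ →* (B ≃ₐ[R] B))
    (P : Submodule R B) : Prop :=
  P ≠ ⊥ ∧ ∀ J : Submodule R B, J ≤ P → IsTwoSidedIdeal J → IsInvariant σ J → J = ⊥ ∨ J = P

section TwoSidedIdeal

variable {P Q J : Submodule R B}

theorem IsTwoSidedIdeal.sup (hP : P.IsTwoSidedIdeal) (hQ : Q.IsTwoSidedIdeal) :
    (P ⊔ Q).IsTwoSidedIdeal := by
  intro a z hz
  obtain ⟨x, hx, y, hy, rfl⟩ := mem_sup.mp hz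
  rw [mul_add, add_mul]
  exact ⟨add_mem_sup (hP a x hx).1 (hQ a y hy).1, add_mem_sup (hP a x hx).2 (hQ a y hy).2⟩

theorem IsTwoSidedIdeal.inf (hP : P.IsTwoSidedIdeal) (hQ : Q.IsTwoSidedIdeal) :
    (P ⊓ Q).IsTwoSidedIdeal := fun a _ hx =>
  ⟨⟨(hP a _ hx.1).1, (hQ a _ hx.2).1⟩, ⟨(hP a _ hx.1).2, (hQ a _ hx.2).2⟩⟩

theorem IsTwoSidedIdeal.map_of_map_mul {g : B ≃ₗ[R] B} (hg : ∀ a b : B, g (a * b) = g b * g a)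
    (hP : P.IsTwoSidedIdeal) : (P.map (g : B →ₗ[R] B)).IsTwoSidedIdeal := by
  rintro a _ ⟨x, hx, rfl⟩
  refine ⟨⟨x * g.symm a, (hP _ x hx).2, ?_⟩, ⟨g.symm a * x, (hP _ x hx).1, ?_⟩⟩ <;>
    simp [hg]

theorem eq_bot_of_forall_mul_eq_zero [IsSemisimpleRing B] (hJ : ∀ a : B, ∀ x ∈ J, a * x ∈ J)
    (hmul : ∀ x ∈ J, ∀ y ∈ J, x * y = 0) : J = ⊥ := by
  let I : Ideal B := { J.toAddSubmonoid with smul_mem' := hJ }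
  obtain ⟨e, he, hI⟩ := IsSemisimpleRing.ideal_eq_span_idempotent I
  have heJ : e ∈ J := show e ∈ I from hI ▸ Ideal.subset_span rfl
  have he0 : e = 0 := he.symm.trans (hmul e heJ e heJ)
  rw [he0, Ideal.span_singleton_eq_bot.mpr rfl] at hI
  refine eq_bot_iff.mpr fun x hx => ?_
  have hxI : x ∈ I := hx
  rwa [hI] at hxI

theorem IsTwoSidedIdeal.eq_bot_of_le_sup [IsSemisimpleRing B] (hJ : J.IsTwoSidedIdeal)
    (hP : P.IsTwoSidedIdeal) (hQ : Q.IsTwoSidedIdeal) (hle : J ≤ P ⊔ Q)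
    (hJP : J ⊓ P = ⊥) (hJQ : J ⊓ Q = ⊥) : J = ⊥ := by
  refine eq_bot_of_forall_mul_eq_zero (fun a x hx => (hJ a x hx).1) fun x hx y hy => ?_
  obtain ⟨p, hp, q, hq, rfl⟩ := mem_sup.mp (hle hy)
  have hxp : x * p ∈ J ⊓ P := ⟨(hJ p x hx).2, (hP x p hp).1⟩
  have hxq : x * q ∈ J ⊓ Q := ⟨(hJ q x hx).2, (hQ x q hq).1⟩
  rw [hJP] at hxp
  rw [hJQ] at hxq
  rw [mul_add, (mem_bot R).mp hxp, (mem_bot R).mp hxq, add_zero]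

end TwoSidedIdeal

section Invariant

variable {G₀ : Type*} [Group G₀] {σ : G₀ →* (B ≃ₐ[R] B)} {g : B ≃ₗ[R] B} {P Q : Submodule R B}

theorem IsInvariant.sup (hP : P.IsInvariant σ) (hQ : Q.IsInvariant σ) :
    (P ⊔ Q).IsInvariant σ := by
  intro t z hz
  obtain ⟨x, hx, y, hy, rfl⟩ := mem_sup.mp hz
  rw [map_add]
  exact add_mem_sup (hP t x hx) (hQ t y hy)

theorem IsInvariant.inf (hP : P.IsInvariant σ) (hQ : Q.IsInvariant σ) :
    (P ⊓ Q).IsInvariant σ := fun t _ hx => ⟨hP t _ hx.1, hQ t _ hx.2⟩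

theorem IsInvariant.map (hconj : ∀ t : G₀, ∃ s : G₀, ∀ x : B, g.symm (σ t (g x)) = σ s x)
    (hP : P.IsInvariant σ) : (P.map (g : B →ₗ[R] B)).IsInvariant σ := by
  rintro t _ ⟨x, hx, rfl⟩
  obtain ⟨s, hs⟩ := hconj t
  exact ⟨σ s x, hP s x hx, by simp [← hs]⟩

theorem IsInvariant.map_map_le {t₀ : G₀} (hg2 : ∀ x : B, g (g x) = σ t₀ x)
    (hP : P.IsInvariant σ) : (P.map (g : B →ₗ[R] B)).map (g : B →ₗ[R] B) ≤ P := by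
  rintro _ ⟨_, ⟨x, hx, rfl⟩, rfl⟩
  simpa [hg2] using hP t₀ x hx

theorem IsSimpleInvariantIdeal.eq_bot_or_eq_sup_map [IsSemisimpleRing B] {J : Submodule R B}
    (hP : P.IsSimpleInvariantIdeal σ) (hPi : P.IsTwoSidedIdeal) (hPσ : P.IsInvariant σ)
    (hganti : ∀ a b : B, g (a * b) = g b * g a)
    (hgg : (P.map (g : B →ₗ[R] B)).map (g : B →ₗ[R] B) ≤ P)
    (hJ : J ≤ P ⊔ P.map (g : B →ₗ[R] B)) (hJi : J.IsTwoSidedIdeal) (hJσ : J.IsInvariant σ)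
    (hJg : ∀ x ∈ J, g x ∈ J) :
    J = ⊥ ∨ J = P ⊔ P.map (g : B →ₗ[R] B) := by
  rcases hP.2 (J ⊓ P) inf_le_right (hJi.inf hPi) (hJσ.inf hPσ) with hJP | hJP
  · have hJgP : J ⊓ P.map (g : B →ₗ[R] B) = ⊥ := by
      refine eq_bot_iff.mpr fun x hx => ?_
      have hgx : g x ∈ J ⊓ P := ⟨hJg x hx.1, hgg (mem_map_of_mem hx.2)⟩
      rw [hJP, mem_bot] at hgx
      exact (mem_bot R).mpr (g.map_eq_zero_iff.mp hgx)
    exact Or.inl (hJi.eq_bot_of_le_sup hPi (hPi.map_of_map_mul hganti) hJ hJP hJgP)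
  · have hPJ : P ≤ J := hJP ▸ inf_le_left
    refine Or.inr (le_antisymm hJ (sup_le hPJ ?_))
    rintro _ ⟨x, hx, rfl⟩
    exact hJg x (hPJ hx)

end Invariant

theorem map_sup_map_le {g : B ≃ₗ[R] B} {P : Submodule R B}
    (hgg : (P.map (g : B →ₗ[R] B)).map (g : B →ₗ[R] B) ≤ P) :
    (P ⊔ P.map (g : B →ₗ[R] B)).map (g : B →ₗ[R] B) ≤ P ⊔ P.map (g : B →ₗ[R] B) := by
  rw [map_sup]
  exact sup_le le_sup_right (hgg.trans le_sup_left)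

end Submodule

open Submodule

theorem sum_with_antiAut_image_is_G_simple_general
    (F : Type*) [Field F]
    (B : Type*) [Ring B] [Algebra F B] [IsSemisimpleRing B]
    (G₀ : Type*) [Group G₀]
    -- `G₀` acts on `B` by algebra automorphisms
    (σ : G₀ →* (B ≃ₐ[F] B))
    -- `g` is a bijective anti-automorphism of `B`
    (g : B ≃ₗ[F] B) (hganti : ∀ a b : B, g (a * b) = g b * g a)
    -- `g` normalizes the `G₀`-action and `g² ∈ G₀`
    (hnorm : ∀ t : G₀, ∃ t' : G₀, ∀ b : B, g (σ t (g.symm b)) = σ t' b)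
    (hg2 : ∃ t₀ : G₀, ∀ b : B, g (g b) = σ t₀ b)
    -- the decomposition into `G₀`-invariant `G₀`-simple ideals
    (k : ℕ) (Bt : Fin k → Submodule F B)
    (hideal : ∀ i, ∀ a : B, ∀ x ∈ Bt i, a * x ∈ Bt i ∧ x * a ∈ Bt i)
    (hinv : ∀ i, ∀ t : G₀, ∀ x ∈ Bt i, σ t x ∈ Bt i)
    (hG₀simple : ∀ i, Bt i ≠ ⊥ ∧
      ∀ J : Submodule F B, J ≤ Bt i →
        (∀ a : B, ∀ x ∈ J, a * x ∈ J ∧ x * a ∈ J) →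
        (∀ t : G₀, ∀ x ∈ J, σ t x ∈ J) → J = ⊥ ∨ J = Bt i) :
    -- each `B̃ᵢ + g(B̃ᵢ)` is a `G`-simple `G`-invariant ideal of `B`
    ∀ i, (Bt i ⊔ (Bt i).map (g : B →ₗ[F] B)) ≠ ⊥ ∧
      (∀ a : B, ∀ x ∈ Bt i ⊔ (Bt i).map (g : B →ₗ[F] B),
        a * x ∈ Bt i ⊔ (Bt i).map (g : B →ₗ[F] B) ∧
        x * a ∈ Bt i ⊔ (Bt i).map (g : B →ₗ[F] B)) ∧
      (∀ t : G₀, ∀ x ∈ Bt i ⊔ (Bt i).map (g : B →ₗ[F] B),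
        σ t x ∈ Bt i ⊔ (Bt i).map (g : B →ₗ[F] B)) ∧
      (∀ x ∈ Bt i ⊔ (Bt i).map (g : B →ₗ[F] B),
        g x ∈ Bt i ⊔ (Bt i).map (g : B →ₗ[F] B)) ∧
      ∀ J : Submodule F B, J ≤ Bt i ⊔ (Bt i).map (g : B →ₗ[F] B) →
        (∀ a : B, ∀ x ∈ J, a * x ∈ J ∧ x * a ∈ J) →
        (∀ t : G₀, ∀ x ∈ J, σ t x ∈ J) →
        (∀ x ∈ J, g x ∈ J) →
        J = ⊥ ∨ J = Bt i ⊔ (Bt i).map (g : B →ₗ[F] B) := by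
  obtain ⟨t₀, ht₀⟩ := hg2
  have hconj := exists_symm_conj_eq hnorm ht₀
  intro i
  have hP : (Bt i).IsSimpleInvariantIdeal σ := hG₀simple i
  have hPi : (Bt i).IsTwoSidedIdeal := hideal i
  have hPσ : (Bt i).IsInvariant σ := hinv i
  have hgg := hPσ.map_map_le ht₀
  exact ⟨ne_bot_of_le_ne_bot hP.1 le_sup_left,
    hPi.sup (hPi.map_of_map_mul hganti),
    hPσ.sup (hPσ.map hconj),
    fun x hx => map_sup_map_le hgg (mem_map_of_mem hx),
    fun J hJ hJi hJσ hJg => hP.eq_bot_or_eq_sup_map hPi hPσ hganti hgg hJ hJi hJσ hJg⟩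

/-- Let `G₀` be a group acting by automorphisms on a finite dimensional
semisimple associative algebra `B` over a field `F`, and suppose
`B = B̃₁ ⊕ … ⊕ B̃_k` is a direct sum of `G₀`-invariant ideals with each `B̃ᵢ` `G₀`-simple.
If `g` is an anti-automorphism of `B` normalizing the `G₀`-action with `g² ∈ G₀`, then for
each `i`, the ideal `B̃ᵢ + g(B̃ᵢ)` is a `G`-simple ideal of `B`, where `G = ⟨G₀, g⟩` (so an
ideal is `G`-invariant iff it is `G₀`-invariant and `g`-invariant). -/
theorem sum_with_antiAut_image_is_G_simple
    (F : Type*) [Field F]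
    (B : Type*) [Ring B] [Algebra F B] [FiniteDimensional F B] [IsSemisimpleRing B]
    (G₀ : Type*) [Group G₀]
    -- `G₀` acts on `B` by algebra automorphisms
    (σ : G₀ →* (B ≃ₐ[F] B))
    -- `g` is a bijective anti-automorphism of `B`
    (g : B ≃ₗ[F] B) (hganti : ∀ a b : B, g (a * b) = g b * g a)
    -- `g` normalizes the `G₀`-action and `g² ∈ G₀`
    (hnorm : ∀ t : G₀, ∃ t' : G₀, ∀ b : B, g (σ t (g.symm b)) = σ t' b)
    (hg2 : ∃ t₀ : G₀, ∀ b : B, g (g b) = σ t₀ b)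
    -- the decomposition into `G₀`-invariant `G₀`-simple ideals
    (k : ℕ) (Bt : Fin k → Submodule F B)
    (hsum : DirectSum.IsInternal Bt)
    (hideal : ∀ i, ∀ a : B, ∀ x ∈ Bt i, a * x ∈ Bt i ∧ x * a ∈ Bt i)
    (hinv : ∀ i, ∀ t : G₀, ∀ x ∈ Bt i, σ t x ∈ Bt i)
    (hG₀simple : ∀ i, Bt i ≠ ⊥ ∧
      ∀ J : Submodule F B, J ≤ Bt i →
        (∀ a : B, ∀ x ∈ J, a * x ∈ J ∧ x * a ∈ J) →
        (∀ t : G₀, ∀ x ∈ J, σ t x ∈ J) → J = ⊥ ∨ J = Bt i) :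
    -- each `B̃ᵢ + g(B̃ᵢ)` is a `G`-simple `G`-invariant ideal of `B`
    ∀ i, (Bt i ⊔ (Bt i).map (g : B →ₗ[F] B)) ≠ ⊥ ∧
      (∀ a : B, ∀ x ∈ Bt i ⊔ (Bt i).map (g : B →ₗ[F] B),
        a * x ∈ Bt i ⊔ (Bt i).map (g : B →ₗ[F] B) ∧
        x * a ∈ Bt i ⊔ (Bt i).map (g : B →ₗ[F] B)) ∧
      (∀ t : G₀, ∀ x ∈ Bt i ⊔ (Bt i).map (g : B →ₗ[F] B),
        σ t x ∈ Bt i ⊔ (Bt i).map (g : B →ₗ[F] B)) ∧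
      (∀ x ∈ Bt i ⊔ (Bt i).map (g : B →ₗ[F] B),
        g x ∈ Bt i ⊔ (Bt i).map (g : B →ₗ[F] B)) ∧
      ∀ J : Submodule F B, J ≤ Bt i ⊔ (Bt i).map (g : B →ₗ[F] B) →
        (∀ a : B, ∀ x ∈ J, a * x ∈ J ∧ x * a ∈ J) →
        (∀ t : G₀, ∀ x ∈ J, σ t x ∈ J) →
        (∀ x ∈ J, g x ∈ J) →
        J = ⊥ ∨ J = Bt i ⊔ (Bt i).map (g : B →ₗ[F] B) :=
  sum_with_antiAut_image_is_G_simple_general F B G₀ σ g hganti hnorm hg2 k Bt hideal hinv hG₀simple
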